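/- The field of a static dyon at the origin with electric charge eC and magnetic charge mC, F = (eC·1 - ι·mC)(𝔵̂/r²)∧b⁰ (i.e. E = eC 𝔵/r³ and B = mC 𝔵/r³), satisfies the source-free Maxwell equation ∂F = 0 on ℝ⁴ minus the worldline {𝔵 = 0}. -/

import Mathlib

open CliffordAlgebra Real

/-- The Minkowski quadratic form of signature (-,+,+,+) on `ℝ⁴`. -/
noncomputable def Qmink : QuadraticForm ℝ (Fin 4 → ℝ) :=
  QuadraticMap.weightedSumSquares ℝ (fun i : Fin 4 => if i = 0 then (-1 : ℝ) else 1)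

/-- The orthonormal basis vectors `b_μ`. -/
noncomputable def bl (μ : Fin 4) : CliffordAlgebra Qmink := ι Qmink (Pi.single μ 1)

/-- The dual basis vectors `b^μ`. -/
noncomputable def bup (μ : Fin 4) : CliffordAlgebra Qmink :=
  if μ = 0 then -bl 0 else bl μ

/-- The unit pseudoscalar `ι = b⁰ b¹ b² b³`. -/
noncomputable def pseu : CliffordAlgebra Qmink := bup 0 * bup 1 * bup 2 * bup 3

/-- The basis bivectors `𝐛𝐛ⁱ = bⁱ ∧ b⁰`. -/
noncomputable def BBup (i : Fin 4) : CliffordAlgebra Qmink :=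
  (1 / 2 : ℝ) • (bup i * bup 0 - bup 0 * bup i)

/-- The basis bivectors `𝐛𝐛_i = b₀ ∧ b_i`. -/
noncomputable def BBlow (i : Fin 4) : CliffordAlgebra Qmink :=
  (1 / 2 : ℝ) • (bl 0 * bl i - bl i * bl 0)

/-- Partial derivative `∂_μ f`. -/
noncomputable def pd (μ : Fin 4) (f : (Fin 4 → ℝ) → ℝ) (x : Fin 4 → ℝ) : ℝ :=
  fderiv ℝ f x (Pi.single μ 1)

/-- The spatial radius `r = |𝔵|` of a space-time point `x = (x⁰, 𝔵)`. -/
noncomputable def srad (x : Fin 4 → ℝ) : ℝ := Real.sqrt (∑ i : Fin 3, (x i.succ) ^ 2)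

/-- The Coulomb-type electric field `E = eC 𝔵/r³` of a static dyon at the origin. -/
noncomputable def Edyon (eC : ℝ) (x : Fin 4 → ℝ) (i : Fin 3) : ℝ :=
  eC * x i.succ / (srad x) ^ 3

/-! ### Auxiliary analytic lemmas -/

noncomputable abbrev nsq (x : Fin 4 → ℝ) : ℝ := ∑ k : Fin 3, (x k.succ) ^ 2

lemma nsq_nonneg (x : Fin 4 → ℝ) : 0 ≤ nsq x := Finset.sum_nonneg fun _ _ => sq_nonneg _

lemma hasF (c : ℝ) (i : Fin 3) (x : Fin 4 → ℝ) (hn : nsq x ≠ 0) :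
    HasFDerivAt (fun y => Edyon c y i)
      ((c * x i.succ) • ((-(3/2) / ((nsq x)^2 * Real.sqrt (nsq x))) •
          (∑ k : Fin 3, ((2 * x k.succ) • ContinuousLinearMap.proj (R := ℝ) (φ := fun _ : Fin 4 => ℝ) k.succ))) +
        ((nsq x * Real.sqrt (nsq x))⁻¹) • (c • ContinuousLinearMap.proj (R := ℝ) (φ := fun _ : Fin 4 => ℝ) i.succ)) x := by
  have h0 : 0 < nsq x := lt_of_le_of_ne (nsq_nonneg x) (Ne.symm hn)
  have heq : (fun y => Edyon c y i) = fun y => (c * y i.succ) * (nsq y * Real.sqrt (nsq y))⁻¹ := by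
    funext y
    have : (srad y)^3 = nsq y * Real.sqrt (nsq y) := by
      rw [srad, pow_succ, Real.sq_sqrt (nsq_nonneg y)]
    rw [Edyon, this, div_eq_mul_inv]
  rw [heq]
  have hnD : HasFDerivAt nsq
      (∑ k : Fin 3, ((2 * x k.succ) • ContinuousLinearMap.proj (R := ℝ) (φ := fun _ : Fin 4 => ℝ) k.succ)) x := by
    apply HasFDerivAt.fun_sum
    intro k _
    have hp := (ContinuousLinearMap.proj (R := ℝ) (φ := fun _ : Fin 4 => ℝ) k.succ).hasFDerivAt (x := x)
    have := hp.mul hp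
    have h2 : (fun y : Fin 4 → ℝ => (y k.succ)^2) = fun y => y k.succ * y k.succ := by
      funext y; ring
    rw [h2]
    refine this.congr_fderiv (Eq.symm ?_)
    ext v
    simp
    ring
  have hg : HasDerivAt (fun t : ℝ => (t * Real.sqrt t)⁻¹)
      (-(3/2) / ((nsq x)^2 * Real.sqrt (nsq x))) (nsq x) := by
    have hs := Real.hasDerivAt_sqrt hn
    have hid : HasDerivAt (fun t : ℝ => t) 1 (nsq x) := hasDerivAt_id _
    have hmul := hid.mul hs
    have hsne : Real.sqrt (nsq x) ≠ 0 := Real.sqrt_ne_zero'.mpr h0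
    have hne : nsq x * Real.sqrt (nsq x) ≠ 0 := mul_ne_zero hn hsne
    have hinv := hmul.inv hne
    refine hinv.congr_deriv (Eq.symm ?_)
    simp only [Pi.mul_apply]
    have hsq : Real.sqrt (nsq x) ^ 2 = nsq x := Real.sq_sqrt (nsq_nonneg x)
    have h3 : Real.sqrt (nsq x) ^ 3 = nsq x * Real.sqrt (nsq x) := by
      rw [pow_succ, hsq]
    rw [div_eq_div_iff (by positivity) (by positivity)]
    field_simp
    ring_nf
    linear_combination -hsq
  have hcomp := hg.comp_hasFDerivAt x hnD
  have hu : HasFDerivAt (fun y : Fin 4 → ℝ => c * y i.succ)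
      (c • ContinuousLinearMap.proj (R := ℝ) (φ := fun _ : Fin 4 => ℝ) i.succ) x :=
    ((ContinuousLinearMap.proj (R := ℝ) (φ := fun _ : Fin 4 => ℝ) i.succ).hasFDerivAt).const_mul c
  exact hu.mul hcomp

lemma pd0 (c : ℝ) (i : Fin 3) (x : Fin 4 → ℝ) (hn : nsq x ≠ 0) :
    pd 0 (fun y => Edyon c y i) x = 0 := by
  rw [pd, (hasF c i x hn).fderiv]
  simp [Pi.single_apply, Fin.succ_ne_zero, (Fin.succ_ne_zero _).symm]

lemma pdS (c : ℝ) (i j : Fin 3) (x : Fin 4 → ℝ) (hn : nsq x ≠ 0) :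
    pd j.succ (fun y => Edyon c y i) x =
      c * ((if i = j then 1 else 0) * nsq x - 3 * x i.succ * x j.succ) /
        ((nsq x)^2 * Real.sqrt (nsq x)) := by
  have h0 : 0 < nsq x := lt_of_le_of_ne (nsq_nonneg x) (Ne.symm hn)
  have hsne : Real.sqrt (nsq x) ≠ 0 := Real.sqrt_ne_zero'.mpr h0
  rw [pd, (hasF c i x hn).fderiv]
  simp [Pi.single_apply, Fin.succ_inj, Finset.sum_ite_eq]
  by_cases h : i = j
  · subst h
    simp only [if_pos rfl, if_pos trivial]
    field_simp
    ring
  · simp only [if_neg h, if_neg (fun hh : j = i => h hh.symm)]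
    field_simp
    ring

/-! ### Auxiliary algebraic lemmas -/

lemma Qmink_single (μ : Fin 4) : Qmink (Pi.single μ 1) = if μ = 0 then (-1:ℝ) else 1 := by
  simp [Qmink, QuadraticMap.weightedSumSquares_apply, Pi.single_apply]

lemma bl_sq (μ : Fin 4) : bl μ * bl μ = algebraMap ℝ _ (if μ = 0 then (-1:ℝ) else 1) := by
  rw [bl, ι_sq_scalar, Qmink_single]

lemma bl_anti {μ ν : Fin 4} (h : μ ≠ ν) : bl μ * bl ν = -(bl ν * bl μ) := by
  have h2 := ι_mul_ι_add_swap (Q := Qmink) (Pi.single μ 1) (Pi.single ν 1)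
  have hp : QuadraticMap.polar (⇑Qmink) (Pi.single μ 1) (Pi.single ν 1) = 0 := by
    revert h; fin_cases μ <;> fin_cases ν <;>
      simp [QuadraticMap.polar, Qmink, QuadraticMap.weightedSumSquares_apply,
        Fin.sum_univ_four, Pi.single_apply]
  rw [hp, map_zero] at h2
  exact eq_neg_of_add_eq_zero_left h2

lemma bl_sq0' (c : CliffordAlgebra Qmink) : bl 0 * (bl 0 * c) = -c := by
  rw [← mul_assoc, bl_sq]
  simp [Algebra.smul_def]

lemma bl_sqS' {μ : Fin 4} (h : μ ≠ 0) (c : CliffordAlgebra Qmink) : bl μ * (bl μ * c) = c := by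
  rw [← mul_assoc, bl_sq, if_neg h]
  simp

lemma bl_anti' {μ ν : Fin 4} (h : μ ≠ ν) (c : CliffordAlgebra Qmink) :
    bl μ * (bl ν * c) = -(bl ν * (bl μ * c)) := by
  rw [← mul_assoc, bl_anti h, ← mul_assoc, neg_mul]

-- concrete instances for simp-based normalization (sorting generators ascending)
lemma sw10 : bl 1 * bl 0 = -(bl 0 * bl 1) := bl_anti (by decide)
lemma sw20 : bl 2 * bl 0 = -(bl 0 * bl 2) := bl_anti (by decide)
lemma sw30 : bl 3 * bl 0 = -(bl 0 * bl 3) := bl_anti (by decide)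
lemma sw21 : bl 2 * bl 1 = -(bl 1 * bl 2) := bl_anti (by decide)
lemma sw31 : bl 3 * bl 1 = -(bl 1 * bl 3) := bl_anti (by decide)
lemma sw32 : bl 3 * bl 2 = -(bl 2 * bl 3) := bl_anti (by decide)
lemma sw10' (c) : bl 1 * (bl 0 * c) = -(bl 0 * (bl 1 * c)) := bl_anti' (by decide) c
lemma sw20' (c) : bl 2 * (bl 0 * c) = -(bl 0 * (bl 2 * c)) := bl_anti' (by decide) c
lemma sw30' (c) : bl 3 * (bl 0 * c) = -(bl 0 * (bl 3 * c)) := bl_anti' (by decide) c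
lemma sw21' (c) : bl 2 * (bl 1 * c) = -(bl 1 * (bl 2 * c)) := bl_anti' (by decide) c
lemma sw31' (c) : bl 3 * (bl 1 * c) = -(bl 1 * (bl 3 * c)) := bl_anti' (by decide) c
lemma sw32' (c) : bl 3 * (bl 2 * c) = -(bl 2 * (bl 3 * c)) := bl_anti' (by decide) c
lemma sq0 : bl 0 * bl 0 = -1 := by rw [bl_sq]; simp
lemma sq1 : bl 1 * bl 1 = 1 := by rw [bl_sq, if_neg (by decide)]; simp
lemma sq2 : bl 2 * bl 2 = 1 := by rw [bl_sq, if_neg (by decide)]; simp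
lemma sq3 : bl 3 * bl 3 = 1 := by rw [bl_sq, if_neg (by decide)]; simp
lemma sq0' (c) : bl 0 * (bl 0 * c) = -c := bl_sq0' c
lemma sq1' (c) : bl 1 * (bl 1 * c) = c := bl_sqS' (by decide) c
lemma sq2' (c) : bl 2 * (bl 2 * c) = c := bl_sqS' (by decide) c
lemma sq3' (c) : bl 3 * (bl 3 * c) = c := bl_sqS' (by decide) c

lemma bup0 : bup 0 = -bl 0 := if_pos rfl
lemma bup1 : bup 1 = bl 1 := if_neg (by decide)
lemma bup2 : bup 2 = bl 2 := if_neg (by decide)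
lemma bup3 : bup 3 = bl 3 := if_neg (by decide)

/-- The field `F = E - ιB` of a static dyon at the origin with electric charge `eC`
and magnetic charge `mC`, `E = eC 𝔵/r³` and `B = mC 𝔵/r³`, satisfies the source-free
Maxwell equation `∂F = 0` (with `∂ = b^μ ∂_μ` and `F = Eᵢ 𝐛𝐛ⁱ - Bⁱ ι 𝐛𝐛ᵢ`) on
`ℝ⁴` minus the worldline `{𝔵 = 0}`. -/
theorem stmt18 (eC mC : ℝ) :
    ∀ x : Fin 4 → ℝ, (∃ i : Fin 3, x i.succ ≠ 0) →
      ((∑ μ : Fin 4, ∑ i : Fin 3,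
          pd μ (fun y => Edyon eC y i) x • (bup μ * BBup i.succ)) -
        ∑ μ : Fin 4, ∑ i : Fin 3,
          pd μ (fun y => Edyon mC y i) x • (bup μ * (pseu * BBlow i.succ)))
        = 0 := by
  intro x hx
  obtain ⟨i0, hi0⟩ := hx
  have hn : nsq x ≠ 0 :=
    ne_of_gt (Finset.sum_pos' (fun k _ => sq_nonneg _) ⟨i0, Finset.mem_univ i0, by positivity⟩)
  have hpd : ∀ (c : ℝ) (i : Fin 3) (μ : Fin 4), pd μ (fun y => Edyon c y i) x =
      (if μ = 0 then 0 else
        c * ((if i.succ = μ then 1 else 0) * nsq x - 3 * x i.succ * x μ) /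
          ((nsq x)^2 * Real.sqrt (nsq x))) := by
    intro c i μ
    rcases Fin.eq_zero_or_eq_succ μ with h | ⟨j, rfl⟩
    · subst h; simp [pd0 c i x hn]
    · rw [if_neg (Fin.succ_ne_zero j), pdS c i j x hn]
      simp [Fin.succ_inj]
  have e1 : (Fin.succ 0 : Fin 4) = 1 := rfl
  have e2 : (Fin.succ 1 : Fin 4) = 2 := rfl
  have e3 : (Fin.succ 2 : Fin 4) = 3 := rfl
  simp only [Fin.sum_univ_four, Fin.sum_univ_three]
  simp only [hpd, nsq, Fin.sum_univ_three, e1, e2, e3]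
  simp only [Fin.reduceEq, reduceIte, if_true, if_false, zero_smul, add_zero, zero_add, sub_zero, zero_sub]
  simp only [BBup, BBlow, pseu, bup0, bup1, bup2, bup3, mul_smul_comm, smul_mul_assoc,
    mul_sub, sub_mul, mul_add, add_mul, neg_mul, mul_neg,
    mul_assoc, sw10, sw20, sw30, sw21, sw31, sw32, sw10', sw20', sw30', sw21', sw31', sw32',
    sq0, sq1, sq2, sq3, sq0', sq1', sq2', sq3', neg_neg, mul_one, one_mul, smul_neg,
    sub_neg_eq_add]
  module
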